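/- arXiv:2412.01628 — 4 statements merged into one kernel-verified Lean document; each statement's English description precedes it below -/
import Mathlib

section
/- Let G be a connected simple graph, f a natural number, and u, v, s vertices with dist(v,s) ≤ f+1 and dist(u,s) ≥ f+2. Then every vertex t lying on a shortest path from v to s satisfies dist(t,u) ≠ dist(t,v). -/
/-- Let `u`, `v`, `s` be vertices of a connected simple graph with
`dist v s ≤ f + 1` and `dist u s ≥ f + 2`. Then every vertex `t` lying on a
shortest path from `v` to `s` satisfies `dist t u ≠ dist t v`. -/
theorem dist_ne_on_shortest_path {V : Type*} (G : SimpleGraph V) (hG : G.Connected)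
    (f : ℕ) (u v s : V) (hvs : G.dist v s ≤ f + 1) (hus : f + 2 ≤ G.dist u s)
    (p : G.Walk v s) (hp : p.length = G.dist v s) :
    ∀ t ∈ p.support, G.dist t u ≠ G.dist t v := by
  classical
  intro t ht h
  have hsplit : (p.takeUntil t ht).length + (p.dropUntil t ht).length = p.length := by
    rw [← SimpleGraph.Walk.length_append, SimpleGraph.Walk.take_spec]
  have h1 : G.dist v t ≤ (p.takeUntil t ht).length := SimpleGraph.dist_le _
  have h2 : G.dist t s ≤ (p.dropUntil t ht).length := SimpleGraph.dist_le _
  have key : G.dist v t + G.dist t s ≤ G.dist v s := by omega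
  have hus' : G.dist u s ≤ G.dist u t + G.dist t s :=
    hG.dist_triangle
  have : G.dist u t = G.dist v t := by
    rw [SimpleGraph.dist_comm (u := t)] at h
    rw [h, SimpleGraph.dist_comm]
  omega
end

section
/- Let G be a connected simple graph, f ≥ 1 a natural number, and u, v vertices with dist(u,v) ≥ f+1. Then there exist at least f−1 vertices q with q ∉ {u,v}, dist(u,q) ≤ f+1, and dist(u,q) ≠ dist(v,q). -/
open SimpleGraph

lemma exists_walk_to_getVert {V : Type*} {G : SimpleGraph V} {a b : V}
    (p : G.Walk a b) (i : ℕ) : ∃ w : G.Walk a (p.getVert i), w.length ≤ i := by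
  induction p generalizing i with
  | nil =>
    refine ⟨(SimpleGraph.Walk.nil).copy rfl (by simp [SimpleGraph.Walk.getVert]), by simp⟩
  | @cons a b c h q ih =>
    cases i with
    | zero =>
      exact ⟨(SimpleGraph.Walk.nil).copy rfl (by simp), by simp⟩
    | succ n =>
      obtain ⟨w, hw⟩ := ih n
      exact ⟨(SimpleGraph.Walk.cons h w).copy rfl
        (by rw [SimpleGraph.Walk.getVert_cons_succ]), by simpa using Nat.succ_le_succ hw⟩

lemma dist_getVert_le {V : Type*} {G : SimpleGraph V} {a b : V}
    (p : G.Walk a b) (i : ℕ) : G.dist a (p.getVert i) ≤ i := by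
  obtain ⟨w, hw⟩ := exists_walk_to_getVert p i
  exact le_trans (SimpleGraph.dist_le w) hw

/-- In a connected simple graph, if `f ≥ 1` and `dist u v ≥ f + 1`, then there
are at least `f - 1` vertices `q ∉ {u, v}` with `dist u q ≤ f + 1` and
`dist u q ≠ dist v q`. -/
theorem many_distinguishing_vertices_of_far {V : Type*} (G : SimpleGraph V)
    (hG : G.Connected) (f : ℕ) (hf : 1 ≤ f) (u v : V) (huv : f + 1 ≤ G.dist u v) :
    ∃ Q : Finset V, f - 1 ≤ Q.card ∧
      ∀ q ∈ Q, q ≠ u ∧ q ≠ v ∧ G.dist u q ≤ f + 1 ∧ G.dist u q ≠ G.dist v q := by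
  classical
  set d := G.dist u v with hd
  obtain ⟨p, hp⟩ := hG.exists_walk_length_eq_dist u v
  set I : Finset ℕ := (Finset.Icc 1 (f + 1)).filter (fun i => 2 * i ≠ d ∧ i ≠ d) with hI
  -- key facts about vertices on the geodesic
  have key : ∀ i ∈ Finset.Icc 1 (f + 1),
      G.dist u (p.getVert i) = i ∧ G.dist v (p.getVert i) = d - i := by
    intro i hi
    rw [Finset.mem_Icc] at hi
    have hid : i ≤ d := le_trans hi.2 huv
    have h1 : G.dist u (p.getVert i) ≤ i := dist_getVert_le p i
    have h2 : G.dist v (p.getVert i) ≤ d - i := by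
      have := dist_getVert_le p.reverse (d - i)
      rwa [SimpleGraph.Walk.getVert_reverse, hp, ← hd,
        Nat.sub_sub_self hid] at this
    have htri : d ≤ G.dist u (p.getVert i) + G.dist v (p.getVert i) := by
      rw [SimpleGraph.dist_comm (u := v)]
      exact hG.dist_triangle
    omega
  refine ⟨I.image p.getVert, ?_, ?_⟩
  · have hinj : Set.InjOn p.getVert I := by
      intro i hi j hj hij
      have hi' := key i (Finset.mem_filter.mp hi).1
      have hj' := key j (Finset.mem_filter.mp hj).1
      rw [← hi'.1, ← hj'.1, hij]
    rw [Finset.card_image_of_injOn hinj]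
    have hsub : (Finset.Icc 1 (f + 1)).filter (fun i => ¬(2 * i ≠ d ∧ i ≠ d)) ⊆
        ({d / 2, d} : Finset ℕ) := by
      intro x hx
      simp only [Finset.mem_filter, not_and_or, not_ne_iff] at hx
      simp only [Finset.mem_insert, Finset.mem_singleton]
      omega
    have hcard2 : ((Finset.Icc 1 (f + 1)).filter (fun i => ¬(2 * i ≠ d ∧ i ≠ d))).card ≤ 2 :=
      le_trans (Finset.card_le_card hsub) (by
        apply le_trans (Finset.card_insert_le _ _); simp)
    have hsplit := Finset.card_filter_add_card_filter_not
      (s := Finset.Icc 1 (f + 1)) (p := fun i => 2 * i ≠ d ∧ i ≠ d)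
    have hicc : (Finset.Icc 1 (f + 1)).card = f + 1 := by
      simp [Nat.card_Icc]
    rw [hI]
    omega
  · intro q hq
    obtain ⟨i, hi, rfl⟩ := Finset.mem_image.mp hq
    have hmem := Finset.mem_filter.mp hi
    have hk := key i hmem.1
    obtain ⟨h2i, hidne⟩ := hmem.2
    have hi1 : 1 ≤ i := (Finset.mem_Icc.mp hmem.1).1
    have hi2 : i ≤ f + 1 := (Finset.mem_Icc.mp hmem.1).2
    have hid : i ≤ d := le_trans hi2 huv
    refine ⟨?_, ?_, ?_, ?_⟩
    · intro h
      rw [h] at hk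
      have := hk.1
      rw [SimpleGraph.dist_self] at this
      omega
    · intro h
      rw [h] at hk
      have := hk.1
      rw [← hd] at this
      omega
    · rw [hk.1]; exact hi2
    · rw [hk.1, hk.2]; omega
end

section
/- Let G be a connected simple graph, f a natural number, and S a (2f+2,2f+1)-ruling set of G. If v ∈ S and u is an alternative node for v, then (S \ {v}) ∪ {u} is also a (2f+2,2f+1)-ruling set of G. -/
/-- A `(2f+2, 2f+1)`-ruling set of `G`: every two distinct members are at
distance at least `2f + 2`, and every vertex is at distance at most `2f + 1`
from some member. -/
def IsRulingSet {V : Type*} (G : SimpleGraph V) (f : ℕ) (S : Set V) : Prop :=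
  (∀ u ∈ S, ∀ v ∈ S, u ≠ v → 2 * f + 2 ≤ G.dist u v) ∧
  (∀ w : V, ∃ v ∈ S, G.dist w v ≤ 2 * f + 1)

/-- `u` is an alternative node for `v` (with respect to the parameter `f`):
`u ≠ v`, `dist u v ≤ f`, and there are at most `f - 2` vertices
`q ∈ B_{f+1}(v) ∪ B_{f+1}(u)` with `q ∉ {u, v}` and `dist q v ≠ dist q u`. -/
def IsAlternativeNode {V : Type*} (G : SimpleGraph V) (f : ℕ) (u v : V) : Prop :=
  u ≠ v ∧ G.dist u v ≤ f ∧
    {q : V | (G.dist v q ≤ f + 1 ∨ G.dist u q ≤ f + 1) ∧ q ≠ u ∧ q ≠ v ∧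
      G.dist q v ≠ G.dist q u}.encard ≤ (f - 2 : ℕ)

open SimpleGraph

lemma getVert_dist_le {V : Type*} {G : SimpleGraph V} (hG : G.Connected)
    {a b : V} (p : G.Walk a b) (j : ℕ) :
    G.dist a (p.getVert j) ≤ j ∧ G.dist (p.getVert j) b ≤ p.length - j := by
  induction p generalizing j with
  | @nil x =>
    have : (Walk.nil : G.Walk x x).getVert j = x := Walk.getVert_of_length_le _ (by simp)
    simp [this, SimpleGraph.dist_self]
  | @cons a a' b h q ih =>
    cases j with
    | zero =>
      simp only [Walk.getVert_zero, Nat.sub_zero]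
      exact ⟨by simp, SimpleGraph.dist_le _⟩
    | succ j =>
      rw [Walk.getVert_cons_succ]
      constructor
      · have h1 : G.dist a a' = 1 := SimpleGraph.dist_eq_one_iff_adj.2 h
        have h2 := (ih j).1
        have h3 : G.dist a (q.getVert j) ≤ G.dist a a' + G.dist a' (q.getVert j) :=
          hG.dist_triangle
        omega
      · have := (ih j).2
        rw [Walk.length_cons]
        omega

/-- On a geodesic, the `j`-th vertex is at distance exactly `j` from the start
and `dist a b - j` from the end. -/
lemma getVert_dist_eq {V : Type*} {G : SimpleGraph V} (hG : G.Connected)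
    {a b : V} (p : G.Walk a b) (hp : p.length = G.dist a b) {j : ℕ}
    (hj : j ≤ p.length) :
    G.dist a (p.getVert j) = j ∧ G.dist (p.getVert j) b = G.dist a b - j := by
  obtain ⟨h1, h2⟩ := getVert_dist_le hG p j
  have h3 : G.dist a b ≤ G.dist a (p.getVert j) + G.dist (p.getVert j) b :=
    hG.dist_triangle
  rw [hp] at h2 hj
  omega

/-- The exceptional set cannot contain the image of `Finset.Icc 1 (f+1)` under an
injective-on map. -/
lemma no_big_inj {V : Type*} {G : SimpleGraph V} {f : ℕ} {u v : V}
    (hcard : {q : V | (G.dist v q ≤ f + 1 ∨ G.dist u q ≤ f + 1) ∧ q ≠ u ∧ q ≠ v ∧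
      G.dist q v ≠ G.dist q u}.encard ≤ (f - 2 : ℕ))
    (g : ℕ → V) (hg : ∀ j ∈ Set.Icc 1 (f+1), g j ∈ {q : V | (G.dist v q ≤ f + 1 ∨ G.dist u q ≤ f + 1) ∧ q ≠ u ∧ q ≠ v ∧
      G.dist q v ≠ G.dist q u})
    (hinj : Set.InjOn g (Set.Icc 1 (f+1))) : False := by
  have h1 : (Set.Icc 1 (f+1) : Set ℕ).encard ≤
      {q : V | (G.dist v q ≤ f + 1 ∨ G.dist u q ≤ f + 1) ∧ q ≠ u ∧ q ≠ v ∧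
        G.dist q v ≠ G.dist q u}.encard :=
    Set.encard_le_encard_of_injOn hg hinj
  have h2 : (Set.Icc 1 (f+1) : Set ℕ).encard = ((f + 1 : ℕ) : ℕ∞) := by
    rw [← Finset.coe_Icc, Set.encard_coe_eq_coe_finsetCard, Nat.card_Icc]
    norm_num
  rw [h2] at h1
  have h3 := h1.trans hcard
  rw [Nat.cast_le] at h3
  omega

/-- If `S` is a `(2f+2, 2f+1)`-ruling set, `v ∈ S`, and `u` is an alternative
node for `v`, then `(S \ {v}) ∪ {u}` is also a `(2f+2, 2f+1)`-ruling set. -/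
theorem swap_alternative_node_ruling_set {V : Type*} (G : SimpleGraph V)
    (hG : G.Connected) (f : ℕ) (S : Set V) (hS : IsRulingSet G f S)
    (v : V) (hv : v ∈ S) (u : V) (halt : IsAlternativeNode G f u v) :
    IsRulingSet G f ((S \ {v}) ∪ {u}) := by
  obtain ⟨huv, hduv, hcard⟩ := halt
  -- Separation: u is far from every other member of S.
  have sep : ∀ w ∈ S, w ≠ v → w ≠ u → 2 * f + 2 ≤ G.dist u w := by
    intro w hw hwv hwu
    by_contra hlt
    push_neg at hlt
    have hvw : 2 * f + 2 ≤ G.dist v w := hS.1 v hv w hw (fun h => hwv h.symm)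
    have htri : G.dist v w ≤ G.dist v u + G.dist u w := hG.dist_triangle
    have hvu : G.dist v u ≤ f := by rwa [SimpleGraph.dist_comm]
    have hd : f + 2 ≤ G.dist u w := by omega
    obtain ⟨p, hp⟩ := hG.exists_walk_length_eq_dist u w
    refine no_big_inj hcard p.getVert ?_ ?_
    · intro j hj
      obtain ⟨hj1, hj2⟩ := hj
      have hjle : j ≤ p.length := by omega
      obtain ⟨e1, e2⟩ := getVert_dist_eq hG p hp hjle
      have hne_u : p.getVert j ≠ u := by
        intro h
        rw [h, SimpleGraph.dist_self] at e1
        omega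
      have hne_v : p.getVert j ≠ v := by
        intro h
        rw [h] at e2
        have : G.dist v w ≤ 2 * f + 1 := by omega
        omega
      refine ⟨Or.inr (by rw [e1]; omega), hne_u, hne_v, ?_⟩
      intro heq
      have : G.dist (p.getVert j) v = j := by
        rw [heq, SimpleGraph.dist_comm]; exact e1
      have htri2 : G.dist v w ≤ G.dist v (p.getVert j) + G.dist (p.getVert j) w :=
        hG.dist_triangle
      rw [SimpleGraph.dist_comm (u := v) (v := p.getVert j), this, e2] at htri2
      omega
    · intro i hi j hj hij
      have hile : i ≤ p.length := by obtain ⟨_, h2⟩ := hi; omega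
      have hjle : j ≤ p.length := by obtain ⟨_, h2⟩ := hj; omega
      have e1 := (getVert_dist_eq hG p hp hile).1
      have e2 := (getVert_dist_eq hG p hp hjle).1
      rw [← e1, ← e2, hij]
  -- Covering: u covers everything v covered.
  have cov : ∀ w : V, G.dist w v ≤ 2 * f + 1 → G.dist w u ≤ 2 * f + 1 := by
    intro w hwv
    by_cases hsmall : G.dist w v ≤ f
    · have : G.dist w u ≤ G.dist w v + G.dist v u := hG.dist_triangle
      have hvu : G.dist v u ≤ f := by rwa [SimpleGraph.dist_comm]
      omega
    · push_neg at hsmall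
      obtain ⟨p, hp⟩ := hG.exists_walk_length_eq_dist v w
      have hdvw : G.dist v w = G.dist w v := SimpleGraph.dist_comm
      have key : ∃ j ∈ Set.Icc 1 (f + 1),
          p.getVert j = u ∨ G.dist (p.getVert j) v = G.dist (p.getVert j) u := by
        by_contra hno
        push_neg at hno
        refine no_big_inj hcard p.getVert ?_ ?_
        · intro j hj
          obtain ⟨hj1, hj2⟩ := hj
          have hjle : j ≤ p.length := by omega
          obtain ⟨e1, e2⟩ := getVert_dist_eq hG p hp hjle
          have hne_u : p.getVert j ≠ u := (hno j ⟨hj1, hj2⟩).1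
          have hne_v : p.getVert j ≠ v := by
            intro h
            rw [h, SimpleGraph.dist_self] at e1
            omega
          exact ⟨Or.inl (by rw [e1]; omega), hne_u, hne_v, (hno j ⟨hj1, hj2⟩).2⟩
        · intro i hi j hj hij
          have hile : i ≤ p.length := by obtain ⟨_, h2⟩ := hi; omega
          have hjle : j ≤ p.length := by obtain ⟨_, h2⟩ := hj; omega
          have e1 := (getVert_dist_eq hG p hp hile).1
          have e2 := (getVert_dist_eq hG p hp hjle).1
          rw [← e1, ← e2, hij]
      obtain ⟨j, ⟨hj1, hj2⟩, hcase⟩ := key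
      have hjle : j ≤ p.length := by omega
      obtain ⟨e1, e2⟩ := getVert_dist_eq hG p hp hjle
      rcases hcase with h | h
      · rw [← h]
        have : G.dist w (p.getVert j) = G.dist v w - j := by
          rw [SimpleGraph.dist_comm]; exact e2
        omega
      · have hju : G.dist (p.getVert j) u = j := by
          rw [← h, SimpleGraph.dist_comm]; exact e1
        have htri : G.dist w u ≤ G.dist w (p.getVert j) + G.dist (p.getVert j) u :=
          hG.dist_triangle
        rw [hju, SimpleGraph.dist_comm (u := w) (v := p.getVert j), e2] at htri
        omega
  constructor
  · rintro a (⟨haS, hav⟩ | rfl) b (⟨hbS, hbv⟩ | rfl) hab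
    · exact hS.1 a haS b hbS hab
    · rw [SimpleGraph.dist_comm]
      exact sep a haS hav hab
    · exact sep b hbS hbv hab.symm
    · exact absurd rfl hab
  · intro w
    obtain ⟨s, hsS, hws⟩ := hS.2 w
    by_cases hsv : s = v
    · exact ⟨u, Or.inr rfl, cov w (hsv ▸ hws)⟩
    · exact ⟨s, Or.inl ⟨hsS, hsv⟩, hws⟩
end

section
/- Let G be a finite connected simple graph whose vertices carry a linear order (IDs), let f be a natural number, and let S be the greedy set of G for parameter f. Then there exists no vertex v ∈ S for which there is an alternative node u ∉ S with u < v. -/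
/-- `S` is the greedy set of `G` for parameter `f`, with respect to the linear
order (IDs) on vertices: `v ∈ S` iff every `u ∈ S` with `u < v` satisfies
`dist u v ≥ 2f + 2`. -/
def IsGreedySet {V : Type*} [LinearOrder V] (G : SimpleGraph V) (f : ℕ)
    (S : Set V) : Prop :=
  ∀ v : V, v ∈ S ↔ ∀ u ∈ S, u < v → 2 * f + 2 ≤ G.dist u v

private lemma dist_start_getVert_le {V : Type*} {G : SimpleGraph V}
    (hG : G.Connected) : ∀ {u w : V} (p : G.Walk u w) (i : ℕ),
    G.dist u (p.getVert i) ≤ i := by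
  intro u w p
  induction p with
  | nil => intro i; simp [SimpleGraph.Walk.getVert, SimpleGraph.dist_self]
  | @cons a b c h q ih =>
    intro i
    cases i with
    | zero => simp
    | succ n =>
      rw [SimpleGraph.Walk.getVert_cons_succ]
      calc G.dist a (q.getVert n) ≤ G.dist a b + G.dist b (q.getVert n) :=
            hG.dist_triangle
        _ ≤ 1 + n := by
            have := SimpleGraph.dist_le h.toWalk
            simpa using Nat.add_le_add (by simpa using this) (ih n)
        _ = n + 1 := by omega

private lemma dist_getVert_end_le {V : Type*} {G : SimpleGraph V} :
    ∀ {u w : V} (p : G.Walk u w) (i : ℕ),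
    G.dist (p.getVert i) w ≤ p.length - i := by
  intro u w p
  induction p with
  | nil => intro i; simp [SimpleGraph.Walk.getVert]
  | @cons a b c h q ih =>
    intro i
    cases i with
    | zero =>
      simpa using SimpleGraph.dist_le (SimpleGraph.Walk.cons h q)
    | succ n =>
      rw [SimpleGraph.Walk.getVert_cons_succ]
      simpa using ih n

/-- If `S` is the greedy set of a finite connected simple graph for parameter
`f`, then no `v ∈ S` admits an alternative node `u ∉ S` with `u < v`. -/
theorem greedy_set_no_smaller_alternative {V : Type*} [Fintype V] [LinearOrder V]
    (G : SimpleGraph V) (hG : G.Connected) (f : ℕ) (S : Set V)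
    (hS : IsGreedySet G f S) :
    ¬ ∃ v ∈ S, ∃ u, u ∉ S ∧ u < v ∧ IsAlternativeNode G f u v := by
  rintro ⟨v, hv, u, huS, huv, hne, hduv, hcard⟩
  -- since u ∉ S, there is w ∈ S, w < u, with dist w u < 2f+2
  have hu' : ¬ ∀ w ∈ S, w < u → 2 * f + 2 ≤ G.dist w u := fun h => huS ((hS u).mpr h)
  push_neg at hu'
  obtain ⟨w, hwS, hwu, hdwu⟩ := hu'
  have hdwv : 2 * f + 2 ≤ G.dist w v := (hS v).mp hv w hwS (hwu.trans huv)
  -- shortest walk from u to w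
  obtain ⟨p, hp⟩ := (hG.preconnected u w).exists_walk_length_eq_dist
  have htri : G.dist w v ≤ G.dist w u + G.dist u v := hG.dist_triangle
  have hlen : f + 2 ≤ G.dist u w := by rw [SimpleGraph.dist_comm]; omega
  have hlenle : G.dist u w ≤ 2 * f + 1 := by rw [SimpleGraph.dist_comm]; omega
  -- key facts about vertices on the shortest walk
  have key : ∀ i ∈ Finset.Icc 1 (f + 1),
      G.dist u (p.getVert i) = i ∧ i + 1 ≤ G.dist (p.getVert i) v := by
    intro i hi
    simp only [Finset.mem_Icc] at hi
    have h1 : G.dist u (p.getVert i) ≤ i := dist_start_getVert_le hG p i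
    have h2 : G.dist (p.getVert i) w ≤ G.dist u w - i := by
      have := dist_getVert_end_le p i; omega
    have h3 : G.dist u w ≤ G.dist u (p.getVert i) + G.dist (p.getVert i) w :=
      hG.dist_triangle
    have h4 : G.dist u (p.getVert i) = i := by omega
    have h5 : G.dist w v ≤ G.dist w (p.getVert i) + G.dist (p.getVert i) v :=
      hG.dist_triangle
    rw [SimpleGraph.dist_comm (u := w) (v := p.getVert i)] at h5
    exact ⟨h4, by omega⟩
  -- the map i ↦ p.getVert i is injective on Icc 1 (f+1)
  have hinj : Set.InjOn p.getVert ↑(Finset.Icc 1 (f + 1)) := by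
    intro i hi j hj hij
    have := (key i (by simpa using hi)).1
    have := (key j (by simpa using hj)).1
    rw [hij] at *
    omega
  set A : Set V := {q : V | (G.dist v q ≤ f + 1 ∨ G.dist u q ≤ f + 1) ∧ q ≠ u ∧ q ≠ v ∧
      G.dist q v ≠ G.dist q u} with hA
  have hsub : ↑((Finset.Icc 1 (f + 1)).image p.getVert) ⊆ A := by
    intro q hq
    simp only [Finset.coe_image, Set.mem_image] at hq
    obtain ⟨i, hi, rfl⟩ := hq
    obtain ⟨h4, h6⟩ := key i (by simpa using hi)
    simp only [Finset.coe_Icc, Set.mem_Icc] at hi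
    refine ⟨Or.inr (by omega), ?_, ?_, ?_⟩
    · intro h; rw [h] at h4
      have : G.dist u u = 0 := by simp
      omega
    · intro h; rw [h] at h6
      have : G.dist v v = 0 := by simp
      omega
    · rw [SimpleGraph.dist_comm (u := p.getVert i) (v := u)]; omega
  have hcard2 : ((f + 1 : ℕ) : ℕ∞) ≤ A.encard := by
    have := Set.encard_mono hsub
    rwa [Set.encard_coe_eq_coe_finsetCard,
      Finset.card_image_of_injOn hinj, Nat.card_Icc] at this
  have : ((f + 1 : ℕ) : ℕ∞) ≤ ((f - 2 : ℕ) : ℕ∞) := hcard2.trans hcard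
  have := Nat.cast_le.mp this
  omega
end
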